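/- There is no SL sentence φ (over a single agent a and atomic proposition p) such that for every NATS M and every state s of M: M, s ⊨ φ under the generalized SL semantics if and only if M, s ⊨ ψ9 under the USL semantics, where ψ9 := ⟨⟨x⟩⟩(a,x)□(⟨⟨x_0⟩⟩(a,x_0)∘p ∧ ⟨⟨x_0⟩⟩(a,x_0)∘¬p). (Sustainable control is not expressible in SL interpreted over NATS.) -/

import Mathlib

namespace USL

attribute [local instance] Classical.propDecidable

/-- A Non-deterministic Alternating Transition System (NATS). -/
structure NATS (Ag St At : Type) where
  v : St → Set At
  Ch : Ag → St → Set (Set St)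
  Ch_nonempty : ∀ a s, (Ch a s).Nonempty
  Ch_inter : ∀ a₁ a₂ : Ag, a₁ ≠ a₂ → ∀ s : St,
    ∀ c₁ ∈ Ch a₁ s, ∀ c₂ ∈ Ch a₂ s, (c₁ ∩ c₂).Nonempty

variable {Ag St At X : Type}

/-- A strategy, represented on tracks given as (history, current state). -/
structure NATS.Strategy (M : NATS Ag St At) where
  f : Ag → List St → St → Set St
  valid : ∀ a h s, f a h s ∈ M.Ch a s

/-- Translation σ^τ of a strategy by a track prefix τ. -/
def NATS.Strategy.shift {M : NATS Ag St At} (σ : M.Strategy) (τ : List St) : M.Strategy :=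
  ⟨fun a h s => σ.f a (τ ++ h) s, fun a h s => σ.valid a (τ ++ h) s⟩

/-- A (partial) assignment of strategies to variables. -/
def NATS.Assignment (M : NATS Ag St At) (X : Type) : Type := X → Option M.Strategy

def NATS.Assignment.shift {M : NATS Ag St At} (μ : M.Assignment X) (τ : List St) :
    M.Assignment X :=
  fun x => (μ x).map (fun σ => σ.shift τ)

/-- A commitment: a finite sequence over P(Ag) × X; the head is the most recent binding. -/
abbrev Commitment (Ag X : Type) := List (Set Ag × X)

/-- The choice induced by a single binding (A, x). -/
noncomputable def bindChoice {M : NATS Ag St At} (μ : M.Assignment X) (A : Set Ag) (x : X)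
    (h : List St) (s : St) : Set St :=
  match μ x with
  | some σ => if A.Nonempty then ⋂ a ∈ A, σ.f a h s else Set.univ
  | none => Set.univ

/-- The function from tracks to sets of states induced by a context (μ, κ);
    older bindings (towards the tail) have priority. -/
noncomputable def ctxFun {M : NATS Ag St At} (μ : M.Assignment X) :
    Commitment Ag X → List St → St → Set St
  | [] => fun _ _ => Set.univ
  | (A, x) :: κ => fun h s =>
      let r := ctxFun μ κ h s
      if (r ∩ bindChoice μ A x h s).Nonempty then r ∩ bindChoice μ A x h s else r

/-- One step of the transition relation of a NATS. -/
def NATS.Step (M : NATS Ag St At) (s s' : St) : Prop := ∀ a : Ag, ∃ c ∈ M.Ch a s, s' ∈ c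

/-- A path: an infinite sequence of states all of whose finite prefixes are tracks. -/
def NATS.IsPath (M : NATS Ag St At) (lam : ℕ → St) : Prop := ∀ n, M.Step (lam n) (lam (n + 1))

/-- The history λ_0 … λ_{n-1}. -/
def histOf (lam : ℕ → St) (n : ℕ) : List St := (List.range n).map lam

/-- The outcomes of a context (μ, κ) from a state s. -/
def outcomes (M : NATS Ag St At) (μ : M.Assignment X) (κ : Commitment Ag X) (s : St) :
    Set (ℕ → St) :=
  {lam | M.IsPath lam ∧ lam 0 = s ∧ ∀ n, lam (n + 1) ∈ ctxFun μ κ (histOf lam n) (lam n)}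

mutual
/-- USL state formulas. -/
inductive StateForm (Ag At X : Type) : Type where
  | atom (p : At)
  | snot (φ : StateForm Ag At X)
  | sand (φ₁ φ₂ : StateForm Ag At X)
  | exq (x : X) (φ : StateForm Ag At X)
  | bind (A : Set Ag) (x : X) (ψ : PathForm Ag At X)
  | unbind (A : Set Ag) (x : X) (ψ : PathForm Ag At X)
/-- USL path formulas. -/
inductive PathForm (Ag At X : Type) : Type where
  | ofState (φ : StateForm Ag At X)
  | pnot (ψ : PathForm Ag At X)
  | pand (ψ₁ ψ₂ : PathForm Ag At X)
  | puntil (ψ₁ ψ₂ : PathForm Ag At X)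
  | pnext (ψ : PathForm Ag At X)
end

/-- The commitment κ[A ↛ x]: every pair (B, x) is replaced by (B ∖ A, x). -/
noncomputable def unbindCom (A : Set Ag) (x : X) (κ : Commitment Ag X) : Commitment Ag X :=
  κ.map (fun e => if e.2 = x then (e.1 \ A, e.2) else e)

mutual
/-- USL satisfaction, state formulas. -/
def SatS (M : NATS Ag St At) (μ : M.Assignment X) (κ : Commitment Ag X) (s : St) :
    StateForm Ag At X → Prop
  | .atom p => p ∈ M.v s
  | .snot φ => ¬ SatS M μ κ s φ
  | .sand φ₁ φ₂ => SatS M μ κ s φ₁ ∧ SatS M μ κ s φ₂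
  | .exq x φ => ∃ σ : M.Strategy, SatS M (Function.update μ x (some σ)) κ s φ
  | .bind A x ψ => ∀ lam ∈ outcomes M μ ((A, x) :: κ) s, SatP M μ ((A, x) :: κ) lam ψ
  | .unbind A x ψ =>
      ∀ lam ∈ outcomes M μ (unbindCom A x κ) s, SatP M μ (unbindCom A x κ) lam ψ
/-- USL satisfaction, path formulas. -/
def SatP (M : NATS Ag St At) (μ : M.Assignment X) (κ : Commitment Ag X) (lam : ℕ → St) :
    PathForm Ag At X → Prop
  | .ofState φ => SatS M μ κ (lam 0) φ
  | .pnot ψ => ¬ SatP M μ κ lam ψ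
  | .pand ψ₁ ψ₂ => SatP M μ κ lam ψ₁ ∧ SatP M μ κ lam ψ₂
  | .puntil ψ₁ ψ₂ => ∃ i : ℕ,
      SatP M (μ.shift (histOf lam i)) κ (fun n => lam (n + i)) ψ₂ ∧
      ∀ j < i, SatP M (μ.shift (histOf lam j)) κ (fun n => lam (n + j)) ψ₁
  | .pnext ψ => SatP M (μ.shift [lam 0]) κ (fun n => lam (n + 1)) ψ
end

/-- The empty assignment. -/
def emptyAsg (M : NATS Ag St At) (X : Type) : M.Assignment X := fun _ => none

/-- Truth of a USL sentence at a state: empty assignment and empty commitment. -/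
def USLTrue (M : NATS Ag St At) (s : St) (φ : StateForm Ag At X) : Prop :=
  SatS M (emptyAsg M X) [] s φ

mutual
/-- Free variables of a state formula. -/
def freeS : StateForm Ag At X → Set X
  | .atom _ => ∅
  | .snot φ => freeS φ
  | .sand φ₁ φ₂ => freeS φ₁ ∪ freeS φ₂
  | .exq x φ => freeS φ \ {x}
  | .bind _ x ψ => freeP ψ ∪ {x}
  | .unbind _ x ψ => freeP ψ ∪ {x}
/-- Free variables of a path formula. -/
def freeP : PathForm Ag At X → Set X
  | .ofState φ => freeS φ
  | .pnot ψ => freeP ψ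
  | .pand ψ₁ ψ₂ => freeP ψ₁ ∪ freeP ψ₂
  | .puntil ψ₁ ψ₂ => freeP ψ₁ ∪ freeP ψ₂
  | .pnext ψ => freeP ψ
end

/-- A sentence: a formula with no free variable. -/
def StateForm.IsSentence (φ : StateForm Ag At X) : Prop := freeS φ = ∅

mutual
/-- SL formulas: USL formulas with no unbinder whose binders bind single agents. -/
def IsSLS : StateForm Ag At X → Prop
  | .atom _ => True
  | .snot φ => IsSLS φ
  | .sand φ₁ φ₂ => IsSLS φ₁ ∧ IsSLS φ₂
  | .exq _ φ => IsSLS φ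
  | .bind A _ ψ => (∃ a : Ag, A = {a}) ∧ IsSLP ψ
  | .unbind _ _ _ => False
def IsSLP : PathForm Ag At X → Prop
  | .ofState φ => IsSLS φ
  | .pnot ψ => IsSLP ψ
  | .pand ψ₁ ψ₂ => IsSLP ψ₁ ∧ IsSLP ψ₂
  | .puntil ψ₁ ψ₂ => IsSLP ψ₁ ∧ IsSLP ψ₂
  | .pnext ψ => IsSLP ψ
end

/-- The commitment κ* used by the generalized SL binder: every pair (A, y) is replaced
    by (A, x); if there is no such pair, (A, x) is appended as the most recent binding. -/
noncomputable def slRebind (A : Set Ag) (x : X) (κ : Commitment Ag X) : Commitment Ag X :=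
  if ∃ e ∈ κ, e.1 = A then κ.map (fun e => if e.1 = A then (A, x) else e) else (A, x) :: κ

mutual
/-- Generalized SL satisfaction over NATS, state formulas: as USL except the binder
    clause, where binding revokes the agent's previously bound strategies. -/
def SatSLS (M : NATS Ag St At) (μ : M.Assignment X) (κ : Commitment Ag X) (s : St) :
    StateForm Ag At X → Prop
  | .atom p => p ∈ M.v s
  | .snot φ => ¬ SatSLS M μ κ s φ
  | .sand φ₁ φ₂ => SatSLS M μ κ s φ₁ ∧ SatSLS M μ κ s φ₂
  | .exq x φ => ∃ σ : M.Strategy, SatSLS M (Function.update μ x (some σ)) κ s φ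
  | .bind A x ψ =>
      ∀ lam ∈ outcomes M μ (slRebind A x κ) s, SatSLP M μ (slRebind A x κ) lam ψ
  | .unbind A x ψ =>
      ∀ lam ∈ outcomes M μ (unbindCom A x κ) s, SatSLP M μ (unbindCom A x κ) lam ψ
/-- Generalized SL satisfaction over NATS, path formulas. -/
def SatSLP (M : NATS Ag St At) (μ : M.Assignment X) (κ : Commitment Ag X) (lam : ℕ → St) :
    PathForm Ag At X → Prop
  | .ofState φ => SatSLS M μ κ (lam 0) φ
  | .pnot ψ => ¬ SatSLP M μ κ lam ψ
  | .pand ψ₁ ψ₂ => SatSLP M μ κ lam ψ₁ ∧ SatSLP M μ κ lam ψ₂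
  | .puntil ψ₁ ψ₂ => ∃ i : ℕ,
      SatSLP M (μ.shift (histOf lam i)) κ (fun n => lam (n + i)) ψ₂ ∧
      ∀ j < i, SatSLP M (μ.shift (histOf lam j)) κ (fun n => lam (n + j)) ψ₁
  | .pnext ψ => SatSLP M (μ.shift [lam 0]) κ (fun n => lam (n + 1)) ψ
end

/-- Truth of an SL sentence at a state under the generalized SL semantics. -/
def SLTrue (M : NATS Ag St At) (s : St) (φ : StateForm Ag At X) : Prop :=
  SatSLS M (emptyAsg M X) [] s φ

/-- A NATS is deterministic if any selection of one choice per agent intersects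
    in a singleton. -/
def NATS.Deterministic (M : NATS Ag St At) : Prop :=
  ∀ (s : St) (c : Ag → Set St), (∀ a, c a ∈ M.Ch a s) → ∃ t : St, (⋂ a, c a) = {t}
/-- The tautology ⊤ (built from the atom p by state-level connectives). -/
def pTop (p : At) : PathForm Ag At X :=
  .ofState (.snot (.sand (.atom p) (.snot (.atom p))))

/-- □ψ abbreviates ¬(⊤ U ¬ψ). -/
def Box (p : At) (ψ : PathForm Ag At X) : PathForm Ag At X :=
  .pnot (.puntil (pTop p) (.pnot ψ))

/-- ψ9 := ⟨⟨x⟩⟩(a,x)□(⟨⟨x₀⟩⟩(a,x₀)∘p ∧ ⟨⟨x₀⟩⟩(a,x₀)∘¬p). -/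
def psi9 (a : Ag) (p : At) (x x₀ : X) : StateForm Ag At X :=
  .exq x (.bind {a} x (Box p (.pand
    (.ofState (.exq x₀ (.bind {a} x₀ (.pnext (.ofState (.atom p))))))
    (.ofState (.exq x₀ (.bind {a} x₀ (.pnext (.pnot (.ofState (.atom p))))))))))

/-- ψ7 = ψ8 := ⟨⟨x₁⟩⟩(a,x₁)□⟨⟨x₂⟩⟩(a,x₂)∘p. -/
def psi78 (a : Ag) (p : At) (x₁ x₂ : X) : StateForm Ag At X :=
  .exq x₁ (.bind {a} x₁ (Box p
    (.ofState (.exq x₂ (.bind {a} x₂ (.pnext (.ofState (.atom p))))))))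

mutual
/-- Polarity check: `pol = true` means positive polarity; every ⟨⟨x⟩⟩ must
    occur positively. -/
def ExS (pol : Bool) : StateForm Ag At X → Prop
  | .atom _ => True
  | .snot φ => ExS (!pol) φ
  | .sand φ₁ φ₂ => ExS pol φ₁ ∧ ExS pol φ₂
  | .exq _ φ => pol = true ∧ ExS pol φ
  | .bind _ _ ψ => ExP pol ψ
  | .unbind _ _ ψ => ExP pol ψ
def ExP (pol : Bool) : PathForm Ag At X → Prop
  | .ofState φ => ExS pol φ
  | .pnot ψ => ExP (!pol) ψ
  | .pand ψ₁ ψ₂ => ExP pol ψ₁ ∧ ExP pol ψ₂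
  | .puntil ψ₁ ψ₂ => ExP pol ψ₁ ∧ ExP pol ψ₂
  | .pnext ψ => ExP pol ψ
end

/-- An existential SL formula: every occurrence of ⟨⟨x⟩⟩ occurs positively. -/
def Existential (φ : StateForm Ag At X) : Prop := ExS true φ

/-- The structure M1. -/
noncomputable def M1 : NATS Unit (Fin 3) Unit where
  v := fun s => {_u : Unit | s = 1}
  Ch := fun _ s => if s = 0 then {{0}, {1}} else {{2}}
  Ch_nonempty := by
    intro a s
    try dsimp only
    split
    · exact ⟨{0}, by simp⟩
    · exact ⟨{2}, by simp⟩
  Ch_inter := by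
    intro a₁ a₂ h
    exact absurd (Subsingleton.elim a₁ a₂) h

/-- The structure M2. -/
noncomputable def M2 : NATS Unit (Fin 3) Unit where
  v := fun s => {_u : Unit | s = 1}
  Ch := fun _ s =>
    if s = 0 then {{0, 1}, {1}, {0}} else if s = 1 then {{0, 1}, {1}, {0, 2}} else {{2}}
  Ch_nonempty := by
    intro a s
    try dsimp only
    split
    · exact ⟨{0, 1}, by simp⟩
    · split
      · exact ⟨{0, 1}, by simp⟩
      · exact ⟨{2}, by simp⟩
  Ch_inter := by
    intro a₁ a₂ h
    exact absurd (Subsingleton.elim a₁ a₂) h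

/-- The binary-tree NATS T_L over {0,1}*, with p true exactly on L. -/
def treeNATS (L : Set (List Bool)) : NATS Unit (List Bool) Unit where
  v := fun w => {_u : Unit | w ∈ L}
  Ch := fun _ w => {{w ++ [false]}, {w ++ [true]}}
  Ch_nonempty := fun _ w => ⟨{w ++ [false]}, by simp⟩
  Ch_inter := by
    intro a₁ a₂ h
    exact absurd (Subsingleton.elim a₁ a₂) h
/-- First-order formulas over the signature (S₀, S₁, P, X₁, …, X_n) of binary trees,
    with n unary second-order variables; first-order variables are indexed by ℕ. -/
inductive FO (n : ℕ) : Type where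
  | eq (i j : ℕ)
  | s0 (i j : ℕ)
  | s1 (i j : ℕ)
  | pre (i : ℕ)
  | svar (k : Fin n) (i : ℕ)
  | fnot (θ : FO n)
  | fand (θ₁ θ₂ : FO n)
  | fex (i : ℕ) (θ : FO n)

/-- Satisfaction of a first-order formula in the binary tree ({0,1}*, S₀, S₁, L),
    with second-order parameters Xs and first-order valuation val. -/
noncomputable def FO.Sat {n : ℕ} (L : Set (List Bool)) (Xs : Fin n → Set (List Bool))
    (val : ℕ → List Bool) : FO n → Prop
  | .eq i j => val i = val j
  | .s0 i j => val j = val i ++ [false]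
  | .s1 i j => val j = val i ++ [true]
  | .pre i => val i ∈ L
  | .svar k i => val i ∈ Xs k
  | .fnot θ => ¬ FO.Sat L Xs val θ
  | .fand θ₁ θ₂ => FO.Sat L Xs val θ₁ ∧ FO.Sat L Xs val θ₂
  | .fex i θ => ∃ w : List Bool, FO.Sat L Xs (Function.update val i w) θ

/-- Free first-order variables of a first-order formula. -/
def FO.free {n : ℕ} : FO n → Set ℕ
  | .eq i j => {i, j}
  | .s0 i j => {i, j}
  | .s1 i j => {i, j}
  | .pre i => {i}
  | .svar _ i => {i}
  | .fnot θ => θ.free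
  | .fand θ₁ θ₂ => θ₁.free ∪ θ₂.free
  | .fex i θ => θ.free \ {i}

/-- Satisfaction of the Σ¹₁ sentence ∃X₁…∃X_n θ in the binary tree determined by L. -/
noncomputable def Sigma11Sat (L : Set (List Bool)) (n : ℕ) (θ : FO n) : Prop :=
  ∃ Xs : Fin n → Set (List Bool), FO.Sat L Xs (fun _ => []) θ

/-- unbind(A, y₁) … unbind(A, y_k) ψ for the list l = [y₁, …, y_k]. -/
def unbindSeq (A : Set Ag) (l : List X) (ψ : PathForm Ag At X) : PathForm Ag At X :=
  l.foldr (fun y ψ' => .ofState (.unbind A y ψ')) ψ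

mutual
/-- Translation of SL formulas into USL: each binder (A, x) is replaced by the
    sequence of unbinders of A from every variable in the list l, followed by (A, x). -/
def tS (l : List X) : StateForm Ag At X → StateForm Ag At X
  | .atom p => .atom p
  | .snot φ => .snot (tS l φ)
  | .sand φ₁ φ₂ => .sand (tS l φ₁) (tS l φ₂)
  | .exq x φ => .exq x (tS l φ)
  | .bind A x ψ =>
      match l with
      | [] => .bind A x (tP l ψ)
      | y :: ys => .unbind A y (unbindSeq A ys (.ofState (.bind A x (tP l ψ))))
  | .unbind A x ψ => .unbind A x (tP l ψ)
def tP (l : List X) : PathForm Ag At X → PathForm Ag At X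
  | .ofState φ => .ofState (tS l φ)
  | .pnot ψ => .pnot (tP l ψ)
  | .pand ψ₁ ψ₂ => .pand (tP l ψ₁) (tP l ψ₂)
  | .puntil ψ₁ ψ₂ => .puntil (tP l ψ₁) (tP l ψ₂)
  | .pnext ψ => .pnext (tP l ψ)
end
mutual
/-- Substitution replacing every occurrence of the subformula p by p ∧ G and every
    occurrence of ¬p by ¬p ∧ G. -/
def gsubS (G : PathForm Ag At X) : StateForm Ag At X → StateForm Ag At X
  | .atom q => .atom q
  | .snot φ => .snot (gsubS G φ)
  | .sand φ₁ φ₂ => .sand (gsubS G φ₁) (gsubS G φ₂)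
  | .exq x φ => .exq x (gsubS G φ)
  | .bind A x ψ => .bind A x (gsubP G ψ)
  | .unbind A x ψ => .unbind A x (gsubP G ψ)
def gsubP (G : PathForm Ag At X) : PathForm Ag At X → PathForm Ag At X
  | .ofState (.atom q) => .pand (.ofState (.atom q)) G
  | .pnot (.ofState (.atom q)) => .pand (.pnot (.ofState (.atom q))) G
  | .ofState φ => .ofState (gsubS G φ)
  | .pnot ψ => .pnot (gsubP G ψ)
  | .pand ψ₁ ψ₂ => .pand (gsubP G ψ₁) (gsubP G ψ₂)
  | .puntil ψ₁ ψ₂ => .puntil (gsubP G ψ₁) (gsubP G ψ₂)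
  | .pnext ψ => .pnext (gsubP G ψ)
end

/-- The guard formula □(⟨⟨v⟩⟩(a,v)∘p ∧ ⟨⟨v⟩⟩(a,v)∘¬p) over the single agent and atom. -/
def guardForm (v : ℕ) : PathForm Unit Unit ℕ :=
  Box () (.pand
    (.ofState (.exq v (.bind {()} v (.pnext (.ofState (.atom ()))))))
    (.ofState (.exq v (.bind {()} v (.pnext (.pnot (.ofState (.atom ()))))))))

/-- The family Γ_i of SL sentences (variable x is coded by 0 and x_i by i + 1). -/
def Gamma : ℕ → StateForm Unit Unit ℕ
  | 0 => psi9 () () 0 1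
  | i + 1 => gsubS (guardForm (i + 2)) (Gamma i)
/-- A concurrent game structure (labeling and transition function). -/
structure CGS (Ag St At Ac : Type) where
  v : St → Set At
  tr : St → (Ag → Ac) → St

/-- SL formulas (over CGS), as in Mogavero–Murano–Vardi. -/
inductive SLForm (Ag At X : Type) : Type where
  | atom (p : At)
  | fnot (φ : SLForm Ag At X)
  | fand (φ₁ φ₂ : SLForm Ag At X)
  | fnext (φ : SLForm Ag At X)
  | funtil (φ₁ φ₂ : SLForm Ag At X)
  | exq (x : X) (φ : SLForm Ag At X)
  | allq (x : X) (φ : SLForm Ag At X)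
  | bind (a : Ag) (x : X) (φ : SLForm Ag At X)

/-- A CGS strategy: a function from tracks (history, current state) to actions. -/
def CGSStrat (St Ac : Type) : Type := List St → St → Ac

/-- Translation of a CGS strategy by a track prefix. -/
def CGSStrat.shift (σ : CGSStrat St Ac) (τ : List St) : CGSStrat St Ac :=
  fun h s => σ (τ ++ h) s

/-- Auxiliary: (current state, history) of the unique play determined by one
    strategy per agent. -/
def playAux {Ac : Type} (G : CGS Ag St At Ac) (α : Ag → CGSStrat St Ac) (s : St) :
    ℕ → St × List St
  | 0 => (s, [])
  | n + 1 =>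
      let q := playAux G α s n
      (G.tr q.1 (fun a => α a q.2 q.1), q.2 ++ [q.1])

/-- The unique play determined by the strategies assigned to all agents. -/
def play {Ac : Type} (G : CGS Ag St At Ac) (α : Ag → CGSStrat St Ac) (s : St) (n : ℕ) : St :=
  (playAux G α s n).1

/-- SL satisfaction over a CGS, with a partial assignment χ of strategies to
    variables and a (total) assignment α of strategies to agents. -/
noncomputable def SLSatCGS {Ac : Type} (G : CGS Ag St At Ac) :
    (X → Option (CGSStrat St Ac)) → (Ag → CGSStrat St Ac) → St → SLForm Ag At X → Prop
  | _, _, s, .atom p => p ∈ G.v s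
  | χ, α, s, .fnot φ => ¬ SLSatCGS G χ α s φ
  | χ, α, s, .fand φ₁ φ₂ => SLSatCGS G χ α s φ₁ ∧ SLSatCGS G χ α s φ₂
  | χ, α, s, .exq x φ => ∃ σ : CGSStrat St Ac, SLSatCGS G (Function.update χ x (some σ)) α s φ
  | χ, α, s, .allq x φ => ∀ σ : CGSStrat St Ac, SLSatCGS G (Function.update χ x (some σ)) α s φ
  | χ, α, s, .bind a x φ => SLSatCGS G χ (Function.update α a ((χ x).getD (α a))) s φ
  | χ, α, s, .fnext φ =>
      SLSatCGS G (fun y => (χ y).map (fun σ => σ.shift [s])) (fun b => (α b).shift [s])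
        (play G α s 1) φ
  | χ, α, s, .funtil φ₁ φ₂ => ∃ i : ℕ,
      SLSatCGS G (fun y => (χ y).map (fun σ => σ.shift ((List.range i).map (play G α s))))
        (fun b => (α b).shift ((List.range i).map (play G α s))) (play G α s i) φ₂ ∧
      ∀ j < i,
        SLSatCGS G (fun y => (χ y).map (fun σ => σ.shift ((List.range j).map (play G α s))))
          (fun b => (α b).shift ((List.range j).map (play G α s))) (play G α s j) φ₁

/-- Free agents of an SL formula (temporal operators free all agents; a binder
    (a, x) binds agent a). -/
def SLForm.freeAg : SLForm Ag At X → Set Ag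
  | .atom _ => ∅
  | .fnot φ => φ.freeAg
  | .fand φ₁ φ₂ => φ₁.freeAg ∪ φ₂.freeAg
  | .fnext _ => Set.univ
  | .funtil _ _ => Set.univ
  | .exq _ φ => φ.freeAg
  | .allq _ φ => φ.freeAg
  | .bind a _ φ => φ.freeAg \ {a}

/-- Free variables of an SL formula. -/
noncomputable def SLForm.freeVr : SLForm Ag At X → Set X
  | .atom _ => ∅
  | .fnot φ => φ.freeVr
  | .fand φ₁ φ₂ => φ₁.freeVr ∪ φ₂.freeVr
  | .fnext φ => φ.freeVr
  | .funtil φ₁ φ₂ => φ₁.freeVr ∪ φ₂.freeVr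
  | .exq x φ => φ.freeVr \ {x}
  | .allq x φ => φ.freeVr \ {x}
  | .bind a x φ => if a ∈ φ.freeAg then φ.freeVr ∪ {x} else φ.freeVr

/-- An SL sentence: no free agent and no free variable. -/
def SLForm.IsSentence (φ : SLForm Ag At X) : Prop := φ.freeAg = ∅ ∧ φ.freeVr = ∅

/-- Truth of an SL sentence at a state of a CGS: with the empty assignment of
    variables (and any assignment of agents, which is irrelevant for sentences). -/
noncomputable def SLTrueCGS {Ac : Type} (G : CGS Ag St At Ac) (s : St)
    (φ : SLForm Ag At X) : Prop :=
  ∀ α : Ag → CGSStrat St Ac, SLSatCGS G (fun _ => none) α s φ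

/-!
In `bicolorNATS` every choice of the single agent contains exactly one `p`-state and one
`¬p`-state, yet two choices may meet in a single state. Under the USL semantics ψ9 holds there:
the strategy bound to `x` stays committed while a second strategy bound to `x₀` refines it to
force `p`, or `¬p`, at the next step. Under the generalized SL semantics binding `x₀` revokes `x`,
so every context is given by at most one strategy, and its outcomes project onto all sequences of
truth values of `p`. Hence no SL formula distinguishes `bicolorNATS` from `fullNATS`, where the
agent controls nothing and ψ9 fails.
-/

lemma bindChoice_of_eq_none {M : NATS Ag St At} {μ : M.Assignment X} {x : X} (hx : μ x = none)
    (A : Set Ag) (h : List St) (s : St) : bindChoice μ A x h s = Set.univ := by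
  rw [bindChoice, hx]

lemma bindChoice_singleton {M : NATS Ag St At} {μ : M.Assignment X} {x : X} {σ : M.Strategy}
    (hx : μ x = some σ) (a : Ag) (h : List St) (s : St) :
    bindChoice μ {a} x h s = σ.f a h s := by
  simp only [bindChoice, hx, Set.singleton_nonempty, if_true, Set.mem_singleton_iff,
    Set.iInter_iInter_eq_left]

lemma ctxFun_cons {M : NATS Ag St At} (μ : M.Assignment X) (A : Set Ag) (x : X)
    (κ : Commitment Ag X) (h : List St) (s : St) :
    ctxFun μ ((A, x) :: κ) h s =
      if (ctxFun μ κ h s ∩ bindChoice μ A x h s).Nonempty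
      then ctxFun μ κ h s ∩ bindChoice μ A x h s else ctxFun μ κ h s := rfl

lemma ctxFun_singleton {M : NATS Ag St At} {μ : M.Assignment X} {A : Set Ag} {x : X}
    {h : List St} {s : St} (hne : (bindChoice μ A x h s).Nonempty) :
    ctxFun μ [(A, x)] h s = bindChoice μ A x h s := by
  rw [ctxFun_cons, ctxFun, Set.univ_inter, if_pos hne]

lemma histOf_succ (lam : ℕ → St) (n : ℕ) : histOf lam (n + 1) = histOf lam n ++ [lam n] := by
  simp [histOf, List.range_succ]

lemma exists_lift_of_image_eq_univ {β : Type} (π : St → β) (C : List St → St → Set St)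
    (hC : ∀ h t, π '' C h t = Set.univ) {s : St} {l : ℕ → β} (h0 : π s = l 0) :
    ∃ lam : ℕ → St, lam 0 = s ∧ (∀ n, lam (n + 1) ∈ C (histOf lam n) (lam n)) ∧ π ∘ lam = l := by
  choose next hnext hπ using fun h t b => (hC h t).symm ▸ Set.mem_univ b
  let q : ℕ → List St × St := fun n =>
    Nat.rec ([], s) (fun n p => (p.1 ++ [p.2], next p.1 p.2 (l (n + 1)))) n
  have hq : ∀ n, q (n + 1) = ((q n).1 ++ [(q n).2], next (q n).1 (q n).2 (l (n + 1))) :=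
    fun _ => rfl
  have hhist : ∀ n, (q n).1 = histOf (fun m => (q m).2) n := by
    intro n
    induction n with
    | zero => rfl
    | succ n ih => rw [hq, histOf_succ, ← ih]
  refine ⟨fun n => (q n).2, rfl, fun n => ?_, funext fun n => ?_⟩
  · show (q (n + 1)).2 ∈ _
    rw [← hhist, hq]
    exact hnext _ _ _
  · cases n with
    | zero => exact h0
    | succ n => exact hπ _ _ _

lemma satP_box_iff {M : NATS Ag St At} (p : At) (μ : M.Assignment X) (κ : Commitment Ag X)
    (lam : ℕ → St) (ψ : PathForm Ag At X) :
    SatP M μ κ lam (Box p ψ) ↔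
      ∀ i, SatP M (μ.shift (histOf lam i)) κ (fun n => lam (n + i)) ψ := by
  simp [Box, pTop, SatP, SatS]

lemma NATS.Assignment.shift_apply_of_eq_some {M : NATS Ag St At} {μ : M.Assignment X} {x : X}
    {σ : M.Strategy} (hx : μ x = some σ) (τ : List St) : μ.shift τ x = some (σ.shift τ) := by
  simp only [NATS.Assignment.shift, hx, Option.map_some]

section FullNATS

variable (v : St → Set At)

def fullNATS : NATS Unit St At where
  v := v
  Ch _ _ := {Set.univ}
  Ch_nonempty _ _ := ⟨Set.univ, rfl⟩
  Ch_inter a₁ a₂ h := absurd (Subsingleton.elim a₁ a₂) h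

instance : Inhabited (fullNATS v).Strategy := ⟨⟨fun _ _ _ => Set.univ, fun _ _ _ => rfl⟩⟩

variable {v}

lemma ctxFun_fullNATS (μ : (fullNATS v).Assignment X) (κ : Commitment Unit X) (h : List St)
    (s : St) : ctxFun μ κ h s = Set.univ := by
  have hb : ∀ A x, bindChoice μ A x h s = Set.univ := by
    intro A x
    cases hx : μ x with
    | none => exact bindChoice_of_eq_none hx A h s
    | some σ =>
      have hσ : ∀ a, σ.f a h s = Set.univ := fun a => σ.valid a h s
      simp [bindChoice, hx, hσ]
  induction κ with
  | nil => rfl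
  | cons e κ ih => rw [ctxFun_cons, ih, hb, Set.univ_inter, ite_self]

lemma mem_outcomes_fullNATS {μ : (fullNATS v).Assignment X} {κ : Commitment Unit X} {s : St}
    {lam : ℕ → St} (h0 : lam 0 = s) : lam ∈ outcomes (fullNATS v) μ κ s := by
  refine ⟨fun _ _ => ⟨Set.univ, rfl, trivial⟩, h0, fun n => ?_⟩
  rw [ctxFun_fullNATS]
  trivial

end FullNATS

def boolVal (b : Bool) : Set Unit := {_u | b = true}

def pairChoice (i j : Bool) : Set (Bool × Bool) := {(true, i), (false, j)}

def bicolorNATS : NATS Unit (Bool × Bool) Unit where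
  v s := boolVal s.1
  Ch _ _ := Set.range (Function.uncurry pairChoice)
  Ch_nonempty _ _ := ⟨_, Set.mem_range_self (true, true)⟩
  Ch_inter a₁ a₂ h := absurd (Subsingleton.elim a₁ a₂) h

def pairStrategy (i j : Bool) : bicolorNATS.Strategy :=
  ⟨fun _ _ _ => pairChoice i j, fun _ _ _ => Set.mem_range_self (i, j)⟩

lemma fst_image_pairChoice (i j : Bool) : Prod.fst '' pairChoice i j = Set.univ := by
  ext (_ | _) <;> simp [pairChoice]

lemma pairChoice_inter (b : Bool) : pairChoice true false ∩ pairChoice b b = {(b, b)} := by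
  cases b <;> ext ⟨_ | _, _ | _⟩ <;> simp [pairChoice]

lemma bicolorNATS_step (s t : Bool × Bool) : bicolorNATS.Step s t := by
  intro _
  refine ⟨pairChoice t.2 t.2, Set.mem_range_self (t.2, t.2), ?_⟩
  obtain ⟨_ | _, _⟩ := t <;> simp [pairChoice]

lemma fst_image_bindChoice_bicolorNATS (μ : bicolorNATS.Assignment X) (x : X)
    (h : List (Bool × Bool)) (s : Bool × Bool) :
    Prod.fst '' bindChoice μ {()} x h s = Set.univ := by
  cases hx : μ x with
  | none => rw [bindChoice_of_eq_none hx, Set.image_univ_of_surjective Prod.fst_surjective]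
  | some σ =>
    obtain ⟨⟨i, j⟩, hσ⟩ := σ.valid () h s
    rw [bindChoice_singleton hx, ← hσ]
    exact fst_image_pairChoice i j

/-- The commitments reachable from `[]` under the generalized SL semantics with one agent. -/
def AtMostOneBinding (κ : Commitment Unit X) : Prop := κ = [] ∨ ∃ x, κ = [({()}, x)]

lemma AtMostOneBinding.rebind {κ : Commitment Unit X} (hκ : AtMostOneBinding κ) (x : X) :
    AtMostOneBinding (slRebind {()} x κ) := by
  right
  refine ⟨x, ?_⟩
  rcases hκ with rfl | ⟨y, rfl⟩ <;> simp [slRebind]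

lemma AtMostOneBinding.fst_image_ctxFun {κ : Commitment Unit X} (hκ : AtMostOneBinding κ)
    (μ : bicolorNATS.Assignment X) (h : List (Bool × Bool)) (s : Bool × Bool) :
    Prod.fst '' ctxFun μ κ h s = Set.univ := by
  rcases hκ with rfl | ⟨x, rfl⟩
  · exact Set.image_univ_of_surjective Prod.fst_surjective
  · have hfst := fst_image_bindChoice_bicolorNATS μ x h s
    rw [ctxFun_singleton (Set.image_nonempty.mp (hfst ▸ Set.univ_nonempty)), hfst]

lemma AtMostOneBinding.exists_outcome {κ : Commitment Unit X} (hκ : AtMostOneBinding κ)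
    (μ : bicolorNATS.Assignment X) {s : Bool × Bool} {l : ℕ → Bool} (h0 : s.1 = l 0) :
    ∃ lam ∈ outcomes bicolorNATS μ κ s, Prod.fst ∘ lam = l := by
  obtain ⟨lam, hlam0, hlam, hπ⟩ :=
    exists_lift_of_image_eq_univ Prod.fst (ctxFun μ κ) (hκ.fst_image_ctxFun μ) h0
  exact ⟨lam, ⟨fun _ => bicolorNATS_step _ _, hlam0, hlam⟩, hπ⟩

mutual

-- There is no `unbind` case: `IsSLS (.unbind ..)` reduces to `False`.
theorem satSLS_bicolorNATS_iff : ∀ (φ : StateForm Unit Unit X), IsSLS φ →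
    ∀ (μG : bicolorNATS.Assignment X) (μB : (fullNATS boolVal).Assignment X)
      (κ : Commitment Unit X), AtMostOneBinding κ → ∀ s : Bool × Bool,
    (SatSLS bicolorNATS μG κ s φ ↔ SatSLS (fullNATS boolVal) μB κ s.1 φ)
  | .atom _, _, _, _, _, _, _ => Iff.rfl
  | .snot φ, hφ, μG, μB, κ, hκ, s => not_congr (satSLS_bicolorNATS_iff φ hφ μG μB κ hκ s)
  | .sand φ₁ φ₂, hφ, μG, μB, κ, hκ, s =>
      and_congr (satSLS_bicolorNATS_iff φ₁ hφ.1 μG μB κ hκ s)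
        (satSLS_bicolorNATS_iff φ₂ hφ.2 μG μB κ hκ s)
  | .exq x φ, hφ, μG, μB, κ, hκ, s =>
      ⟨fun ⟨_, h⟩ => ⟨default, (satSLS_bicolorNATS_iff φ hφ _ _ κ hκ s).mp h⟩,
        fun ⟨_, h⟩ => ⟨pairStrategy true true, (satSLS_bicolorNATS_iff φ hφ _ _ κ hκ s).mpr h⟩⟩
  | .bind _ x ψ, ⟨⟨(), rfl⟩, hψ⟩, μG, μB, κ, hκ, s => by
      have hκ' := hκ.rebind x
      constructor
      · intro hG lB hlB
        obtain ⟨lG, hlG, rfl⟩ := hκ'.exists_outcome μG hlB.2.1.symm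
        exact (satSLP_bicolorNATS_iff ψ hψ μG μB _ hκ' lG).mp (hG lG hlG)
      · intro hB lG hlG
        exact (satSLP_bicolorNATS_iff ψ hψ μG μB _ hκ' lG).mpr
          (hB _ (mem_outcomes_fullNATS (congrArg Prod.fst hlG.2.1)))

theorem satSLP_bicolorNATS_iff : ∀ (ψ : PathForm Unit Unit X), IsSLP ψ →
    ∀ (μG : bicolorNATS.Assignment X) (μB : (fullNATS boolVal).Assignment X)
      (κ : Commitment Unit X), AtMostOneBinding κ → ∀ lam : ℕ → Bool × Bool,
    (SatSLP bicolorNATS μG κ lam ψ ↔ SatSLP (fullNATS boolVal) μB κ (Prod.fst ∘ lam) ψ)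
  | .ofState φ, hψ, μG, μB, κ, hκ, lam => satSLS_bicolorNATS_iff φ hψ μG μB κ hκ (lam 0)
  | .pnot ψ, hψ, μG, μB, κ, hκ, lam => not_congr (satSLP_bicolorNATS_iff ψ hψ μG μB κ hκ lam)
  | .pand ψ₁ ψ₂, hψ, μG, μB, κ, hκ, lam =>
      and_congr (satSLP_bicolorNATS_iff ψ₁ hψ.1 μG μB κ hκ lam)
        (satSLP_bicolorNATS_iff ψ₂ hψ.2 μG μB κ hκ lam)
  | .puntil ψ₁ ψ₂, hψ, _, _, κ, hκ, _ => exists_congr fun _ =>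
      and_congr (satSLP_bicolorNATS_iff ψ₂ hψ.2 _ _ κ hκ _)
        (forall₂_congr fun _ _ => satSLP_bicolorNATS_iff ψ₁ hψ.1 _ _ κ hκ _)
  | .pnext ψ, hψ, _, _, κ, hκ, _ => satSLP_bicolorNATS_iff ψ hψ _ _ κ hκ _

end

lemma outcome_succ_of_refine {μ : bicolorNATS.Assignment X} {x x₀ : X}
    (hx : μ x = some (pairStrategy true false)) {b : Bool}
    (hx₀ : μ x₀ = some (pairStrategy b b)) {s : Bool × Bool} {lam : ℕ → Bool × Bool}
    (hlam : lam ∈ outcomes bicolorNATS μ [({()}, x₀), ({()}, x)] s) : lam 1 = (b, b) := by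
  have hstep := hlam.2.2 0
  rw [ctxFun_cons, ctxFun_singleton, bindChoice_singleton hx, bindChoice_singleton hx₀]
    at hstep
  · simpa only [pairStrategy, pairChoice_inter, Set.singleton_nonempty, if_true,
      Set.mem_singleton_iff] using hstep
  · exact bindChoice_singleton hx () _ _ ▸ ⟨_, Or.inl rfl⟩

lemma satP_psi9_step_bicolorNATS {μ : bicolorNATS.Assignment X} {x x₀ : X} (hne : x ≠ x₀)
    (hx : μ x = some (pairStrategy true false)) (lam : ℕ → Bool × Bool) :
    SatP bicolorNATS μ [({()}, x)] lam
      (.pand (.ofState (.exq x₀ (.bind {()} x₀ (.pnext (.ofState (.atom ()))))))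
        (.ofState (.exq x₀ (.bind {()} x₀ (.pnext (.pnot (.ofState (.atom ())))))))) := by
  have hupd : ∀ σ, Function.update μ x₀ (some σ) x = some (pairStrategy true false) :=
    fun σ => (Function.update_of_ne hne ..).trans hx
  constructor
  · refine ⟨pairStrategy true true, fun lam' hlam' => ?_⟩
    show (lam' 1).1 = true
    rw [outcome_succ_of_refine (hupd _) (Function.update_self ..) hlam']
  · refine ⟨pairStrategy false false, fun lam' hlam' => ?_⟩
    show ¬(lam' 1).1 = true
    rw [outcome_succ_of_refine (hupd _) (Function.update_self ..) hlam']
    exact Bool.false_ne_true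

theorem uslTrue_psi9_bicolorNATS {x x₀ : X} (hne : x ≠ x₀) (s : Bool × Bool) :
    USLTrue bicolorNATS s (psi9 () () x x₀) :=
  ⟨pairStrategy true false, fun _ _ => (satP_box_iff _ _ _ _ _).mpr fun _ =>
    satP_psi9_step_bicolorNATS hne
      (NATS.Assignment.shift_apply_of_eq_some (Function.update_self ..) _) _⟩

theorem not_uslTrue_psi9_fullNATS (x x₀ : X) (s : Bool) :
    ¬ USLTrue (fullNATS boolVal) s (psi9 () () x x₀) := by
  rintro ⟨_, hψ⟩
  have hnow := (satP_box_iff _ _ _ _ _).mp (hψ (fun _ => s) (mem_outcomes_fullNATS rfl)) 0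
  obtain ⟨_, hp⟩ := hnow.1
  exact Bool.false_ne_true (hp (fun n => if n = 0 then s else false) (mem_outcomes_fullNATS rfl))

/-- there is no SL sentence (over a single agent and atomic
proposition p) equivalent over all NATS and states to the USL sentence ψ9. -/
theorem sustainable_control_not_SL_expressible :
    ¬ ∃ (X : Type) (φ : StateForm Unit Unit X), IsSLS φ ∧ φ.IsSentence ∧
      ∀ (St : Type) (M : NATS Unit St Unit) (s : St),
        SLTrue M s φ ↔ USLTrue M s (psi9 () () true false) := by
  rintro ⟨X, φ, hSL, -, hiff⟩
  have hbicolor : SLTrue bicolorNATS (true, true) φ :=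
    (hiff _ _ _).mpr (uslTrue_psi9_bicolorNATS (by decide) _)
  have hfull : SLTrue (fullNATS boolVal) true φ :=
    (satSLS_bicolorNATS_iff φ hSL _ _ [] (Or.inl rfl) (true, true)).mp hbicolor
  exact not_uslTrue_psi9_fullNATS true false true ((hiff _ _ _).mp hfull)

end USL
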